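/- For all a, b ∈ A₀, the Bochner integral ∫_N α_{tn}(a)·b dμ_N(n) depends only on the coset tN of t ∈ G; consequently there is a unique function F_{a,b} : G/N → A with F_{a,b}(q(t)) = ∫_N α_{tn}(a)·b dμ_N(n) for all t ∈ G, and this function is norm-continuous and vanishes outside a compact subset of G/N. -/

import Mathlib

/-!
Everything rests on one fact: for `a, b ∈ A₀` the map `s ↦ α_s(a) b` is continuous with compact
support on `G`. For generators `a = φ(f) a' φ(g)` and `b = φ(f') b' φ(g')` equivariance gives
`α_s(a) b = φ(rt_s f) α_s(a') φ(rt_s g) φ(f') b' φ(g')`, which vanishes unless `supp f' · s`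
meets `supp g`; properness of the action confines such `s` to a compact set, and bilinearity
passes this to the spans. For any such compactly supported continuous `h : G → A`, left
invariance of `μ_N` makes `t ↦ ∫_N h(tn)` constant on cosets, and since `N` is closed the
integrand is supported in a fixed compact subset of `N` for `t` near `t₀`, which gives
continuity without any countability assumption on `G`.
-/

open MeasureTheory ZeroAtInfty MultiplierAlgebra

noncomputable section

variable (G T A : Type*) [Group G] [TopologicalSpace G] [IsTopologicalGroup G]
  [LocallyCompactSpace G] [T2Space G]
  [TopologicalSpace T] [LocallyCompactSpace T] [T2Space T]
  [NonUnitalCStarAlgebra A]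

/-- The data of a free and proper right action of `G` on `T`, a strongly continuous action `α`
of `G` on the C*-algebra `A`, and an `rt`–`α` equivariant nondegenerate *-homomorphism
`φ : C₀(T) → M(A)`. -/
structure FreeProperSetup : Type _ where
  /-- the right action of `G` on `T` -/
  ρ : T → G → T
  ρ_continuous : Continuous fun p : T × G => ρ p.1 p.2
  ρ_one : ∀ t, ρ t 1 = t
  ρ_mul : ∀ t s s', ρ (ρ t s) s' = ρ t (s * s')
  ρ_free : ∀ t s, ρ t s = t → s = 1
  ρ_proper : IsProperMap fun p : T × G => (p.1, ρ p.1 p.2)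
  /-- the induced action on `C₀(T)` -/
  rt : G → C₀(T, ℂ) → C₀(T, ℂ)
  rt_apply : ∀ (s : G) (f : C₀(T, ℂ)) (t : T), rt s f t = f (ρ t s)
  /-- the action of `G` on `A` by *-automorphisms -/
  α : G → A ≃⋆ₐ[ℂ] A
  α_mul : ∀ (s s' : G) (a : A), α (s * s') a = α s (α s' a)
  α_continuous : ∀ a : A, Continuous fun s => α s a
  /-- the nondegenerate equivariant *-homomorphism `φ : C₀(T) → M(A)` -/
  φ : C₀(T, ℂ) →⋆ₙₐ[ℂ] 𝓜(ℂ, A)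
  φ_nondegenerate :
    Dense (Submodule.span ℂ {x : A | ∃ (f : C₀(T, ℂ)) (a : A), (x : 𝓜(ℂ, A)) = φ f * a} : Set A)
  φ_equivariant : ∀ (s : G) (f : C₀(T, ℂ)) (a x : A),
    (x : 𝓜(ℂ, A)) = φ f * a →
      ((α s x : A) : 𝓜(ℂ, A)) = φ (rt s f) * ((α s a : A) : 𝓜(ℂ, A))

variable {G T A}

/-- `A₀` is the linear span of `φ(f)·a·φ(g)` for `a ∈ A` and compactly supported
`f, g ∈ C₀(T)`, regarded as a subset of `A`. -/
def FreeProperSetup.A₀ (S : FreeProperSetup G T A) : Set A :=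
  {x : A | (x : 𝓜(ℂ, A)) ∈ Submodule.span ℂ
    {y : 𝓜(ℂ, A) | ∃ f g : C₀(T, ℂ), HasCompactSupport ⇑f ∧ HasCompactSupport ⇑g ∧
      ∃ a : A, y = S.φ f * (a : 𝓜(ℂ, A)) * S.φ g}}

end

theorem CStarRing.eq_of_forall_mul_right {E : Type*} [NonUnitalNormedRing E] [StarRing E]
    [CStarRing E] {x y : E} (h : ∀ z, x * z = y * z) : x = y := by
  rw [← sub_eq_zero, ← CStarRing.mul_star_self_eq_zero_iff, sub_mul, h, sub_self]

theorem CStarRing.eq_of_forall_left_mul {E : Type*} [NonUnitalNormedRing E] [StarRing E]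
    [CStarRing E] {x y : E} (h : ∀ z, z * x = z * y) : x = y := by
  rw [← sub_eq_zero, ← CStarRing.star_mul_self_eq_zero_iff, mul_sub, h, sub_self]

namespace DoubleCentralizer

variable {𝕜 A : Type*} [NontriviallyNormedField 𝕜] [NonUnitalNormedRing A] [StarRing A]
  [CStarRing A] [NormedSpace 𝕜 A] [SMulCommClass 𝕜 A A] [IsScalarTower 𝕜 A A]

theorem fst_mul_right (m : 𝓜(𝕜, A)) (a z : A) : m.fst (a * z) = m.fst a * z :=
  CStarRing.eq_of_forall_left_mul fun w => by rw [← m.central, ← mul_assoc, m.central, mul_assoc]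

theorem snd_left_mul (m : 𝓜(𝕜, A)) (z a : A) : m.snd (z * a) = z * m.snd a :=
  CStarRing.eq_of_forall_mul_right fun w => by rw [m.central, mul_assoc, ← m.central, mul_assoc]

theorem coe_injective : Function.Injective (DoubleCentralizer.coe 𝕜 : A → 𝓜(𝕜, A)) :=
  fun _ _ h => CStarRing.eq_of_forall_mul_right fun z => congrArg (fun m => m.fst z) h

theorem mul_coe_eq_coe_fst (m : 𝓜(𝕜, A)) (a : A) : m * (a : 𝓜(𝕜, A)) = ↑(m.fst a) := by
  ext z
  · exact fst_mul_right m a z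
  · exact m.central z a

theorem coe_mul_eq_coe_snd (a : A) (m : 𝓜(𝕜, A)) : (a : 𝓜(𝕜, A)) * m = ↑(m.snd a) := by
  ext z
  · exact (m.central a z).symm
  · exact snd_left_mul m z a

theorem coe_zero [StarRing 𝕜] [StarModule 𝕜 A] : ((0 : A) : 𝓜(𝕜, A)) = 0 :=
  map_zero coeHom

theorem coe_mul [StarRing 𝕜] [StarModule 𝕜 A] (a b : A) :
    ((a * b : A) : 𝓜(𝕜, A)) = a * b :=
  map_mul coeHom a b

theorem coe_star [StarRing 𝕜] [StarModule 𝕜 A] (a : A) :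
    ((star a : A) : 𝓜(𝕜, A)) = star (a : 𝓜(𝕜, A)) :=
  map_star coeHom a

end DoubleCentralizer

def compactlySupportedSubmodule (R X M : Type*) [TopologicalSpace X] [Semiring R]
    [AddCommMonoid M] [Module R M] : Submodule R (X → M) where
  carrier := {f | HasCompactSupport f}
  add_mem' := HasCompactSupport.add
  zero_mem' := HasCompactSupport.zero
  smul_mem' c _ hf := hf.smul_left (f := fun _ => c)

section CosetIntegral

open scoped Pointwise

variable {G E : Type*} [Group G] [TopologicalSpace G] [IsTopologicalGroup G]
  [NormedAddCommGroup E] [NormedSpace ℝ E] {N : Subgroup G} [MeasurableSpace N] [BorelSpace N]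
  (μ : Measure N) (g : G → E)

theorem integral_mul_subgroup_eq_of_mk_eq [μ.IsMulLeftInvariant] {t t' : G}
    (h : (t : G ⧸ N) = t') : ∫ n, g (t * n) ∂μ = ∫ n, g (t' * n) ∂μ := by
  set n₀ : N := ⟨t⁻¹ * t', QuotientGroup.eq.mp h⟩
  calc ∫ n, g (t * n) ∂μ = ∫ n, g (t * ↑(n₀ * n)) ∂μ :=
        (integral_mul_left_eq_self (fun n : N => g (t * n)) n₀).symm
    _ = ∫ n, g (t' * n) ∂μ := by simp [n₀, mul_assoc]

noncomputable def cosetIntegral [μ.IsMulLeftInvariant] : G ⧸ N → E :=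
  Quotient.lift (s := QuotientGroup.leftRel N) (fun t => ∫ n, g (t * n) ∂μ)
    fun _ _ h => integral_mul_subgroup_eq_of_mk_eq μ g (Quotient.sound h)

theorem cosetIntegral_mk [μ.IsMulLeftInvariant] (t : G) :
    cosetIntegral μ g t = ∫ n, g (t * n) ∂μ :=
  rfl

theorem continuous_integral_mul_subgroup [LocallyCompactSpace G] [IsFiniteMeasureOnCompacts μ]
    (hN : IsClosed (N : Set G)) (hg : Continuous g) (h'g : HasCompactSupport g) :
    Continuous fun t => ∫ n, g (t * n) ∂μ := by
  refine continuous_iff_continuousAt.2 fun t₀ => ?_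
  obtain ⟨U, hU, hUt₀⟩ := exists_compact_mem_nhds t₀
  refine ContinuousOn.continuousAt ?_ hUt₀
  refine continuousOn_integral_of_compact_support
    (hN.isClosedEmbedding_subtypeVal.isCompact_preimage (hU.inv.mul h'g)) ?_ ?_
  · exact (hg.comp (continuous_fst.mul (continuous_subtype_val.comp continuous_snd))).continuousOn
  · intro t n ht hn
    refine image_eq_zero_of_notMem_tsupport fun hgn => hn ?_
    exact ⟨t⁻¹, Set.inv_mem_inv.mpr ht, t * n, hgn, by group⟩

theorem continuous_cosetIntegral [LocallyCompactSpace G] [μ.IsMulLeftInvariant]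
    [IsFiniteMeasureOnCompacts μ] (hN : IsClosed (N : Set G)) (hg : Continuous g)
    (h'g : HasCompactSupport g) : Continuous (cosetIntegral μ g) :=
  (QuotientGroup.isQuotientMap_mk N).continuous_iff.mpr
    (continuous_integral_mul_subgroup μ g hN hg h'g)

theorem cosetIntegral_eq_zero_of_notMem [μ.IsMulLeftInvariant] {x : G ⧸ N}
    (hx : x ∉ QuotientGroup.mk '' tsupport g) : cosetIntegral μ g x = 0 := by
  induction x using QuotientGroup.induction_on with | H t => ?_
  rw [cosetIntegral_mk]
  refine integral_eq_zero_of_ae (.of_forall fun n => ?_)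
  refine image_eq_zero_of_notMem_tsupport fun hgn => hx ⟨t * n, hgn, ?_⟩
  exact QuotientGroup.eq.mpr (by simp)

end CosetIntegral

namespace FreeProperSetup

variable {G T A : Type*} [Group G] [TopologicalSpace G] [TopologicalSpace T]
  [NonUnitalCStarAlgebra A] (S : FreeProperSetup G T A)

def generators : Set 𝓜(ℂ, A) :=
  {y | ∃ f g : C₀(T, ℂ), HasCompactSupport ⇑f ∧ HasCompactSupport ⇑g ∧
    ∃ a : A, y = S.φ f * (a : 𝓜(ℂ, A)) * S.φ g}

theorem A₀_eq_span : S.A₀ = Submodule.span ℂ ((↑) ⁻¹' S.generators : Set A) := by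
  refine congrArg SetLike.coe (Submodule.span_preimage_eq
    (f := LinearMapClass.linearMap (DoubleCentralizer.coeHom : A →⋆ₙₐ[ℂ] 𝓜(ℂ, A))) ?_ ?_).symm
  · exact ⟨0, 0, 0, .zero, .zero, 0, by simp⟩
  · rintro _ ⟨f, g, -, -, a, rfl⟩
    exact ⟨(S.φ g).snd ((S.φ f).fst a), by
      simp [DoubleCentralizer.mul_coe_eq_coe_fst, DoubleCentralizer.coe_mul_eq_coe_snd]⟩

theorem rt_star (s : G) (g : C₀(T, ℂ)) : S.rt s (star g) = star (S.rt s g) := by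
  ext t
  simp [S.rt_apply]

-- `φ_equivariant` only moves `φ` on the left; taking adjoints moves it on the right.
theorem coe_α_of_coe_eq_mul_φ (s : G) {g : C₀(T, ℂ)} {x a : A}
    (hx : (x : 𝓜(ℂ, A)) = a * S.φ g) :
    ((S.α s x : A) : 𝓜(ℂ, A)) = (S.α s a : A) * S.φ (S.rt s g) := by
  have hstar : ((star x : A) : 𝓜(ℂ, A)) = S.φ (star g) * (star a : A) := by
    rw [DoubleCentralizer.coe_star, hx, star_mul, map_star, DoubleCentralizer.coe_star]
  simpa only [map_star, DoubleCentralizer.coe_star, star_mul, star_star, rt_star]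
    using congrArg star (S.φ_equivariant s (star g) (star a) (star x) hstar)

theorem coe_α_of_coe_eq_φ_mul_φ (s : G) {f g : C₀(T, ℂ)} {x a : A}
    (hx : (x : 𝓜(ℂ, A)) = S.φ f * a * S.φ g) :
    ((S.α s x : A) : 𝓜(ℂ, A)) = S.φ (S.rt s f) * (S.α s a : A) * S.φ (S.rt s g) := by
  have hc : (((S.φ g).snd a : A) : 𝓜(ℂ, A)) = a * S.φ g :=
    (DoubleCentralizer.coe_mul_eq_coe_snd a _).symm
  rw [S.φ_equivariant s f ((S.φ g).snd a) x (by rw [hx, hc, mul_assoc]),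
    S.coe_α_of_coe_eq_mul_φ s hc, mul_assoc]

theorem exists_isCompact_rt_mul_eq_zero {g f : C₀(T, ℂ)} (hg : HasCompactSupport g)
    (hf : HasCompactSupport f) : ∃ K : Set G, IsCompact K ∧ ∀ s ∉ K, S.rt s g * f = 0 := by
  refine ⟨Prod.snd '' ((fun p : T × G => (p.1, S.ρ p.1 p.2)) ⁻¹' (tsupport f ×ˢ tsupport g)),
    (S.ρ_proper.isCompact_preimage (hf.prod hg)).image continuous_snd, fun s hs => ?_⟩
  ext t
  rw [ZeroAtInftyContinuousMap.mul_apply, S.rt_apply, ZeroAtInftyContinuousMap.zero_apply,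
    mul_eq_zero, or_iff_not_imp_left]
  intro hgt
  by_contra hft
  exact hs ⟨(t, s), ⟨subset_tsupport _ hft, subset_tsupport _ hgt⟩, rfl⟩

theorem hasCompactSupport_α_mul_of_mem_generators [T2Space G] {x w : A}
    (hx : (x : 𝓜(ℂ, A)) ∈ S.generators) (hw : (w : 𝓜(ℂ, A)) ∈ S.generators) :
    HasCompactSupport fun s => S.α s x * w := by
  obtain ⟨f, g, -, hg, a, hx⟩ := hx
  obtain ⟨f', g', hf', -, b, hw⟩ := hw
  obtain ⟨K, hK, hK0⟩ := S.exists_isCompact_rt_mul_eq_zero hg hf'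
  refine HasCompactSupport.intro hK fun s hs => DoubleCentralizer.coe_injective (𝕜 := ℂ) ?_
  have hφ : S.φ (S.rt s g) * S.φ f' = 0 := by rw [← map_mul, hK0 s hs, map_zero]
  rw [DoubleCentralizer.coe_mul, DoubleCentralizer.coe_zero, S.coe_α_of_coe_eq_φ_mul_φ s hx, hw]
  simp only [mul_assoc]
  rw [← mul_assoc (S.φ (S.rt s g)), hφ, zero_mul, mul_zero, mul_zero]

def αMulₗ : A →ₗ[ℂ] A →ₗ[ℂ] G → A :=
  LinearMap.mk₂ ℂ (fun x w s => S.α s x * w)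
    (fun _ _ _ => funext fun _ => by simp only [map_add, add_mul, Pi.add_apply])
    (fun _ _ _ => funext fun _ => by simp only [map_smul, smul_mul_assoc, Pi.smul_apply])
    (fun _ _ _ => funext fun _ => by simp only [mul_add, Pi.add_apply])
    (fun _ _ _ => funext fun _ => by simp only [mul_smul_comm, Pi.smul_apply])

theorem hasCompactSupport_α_mul [T2Space G] {a b : A} (ha : a ∈ S.A₀) (hb : b ∈ S.A₀) :
    HasCompactSupport fun s => S.α s a * b := by
  rw [A₀_eq_span, SetLike.mem_coe] at ha hb
  refine (Submodule.map₂_le (f := S.αMulₗ) (r := compactlySupportedSubmodule ℂ G A)).mp ?_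
    a ha b hb
  rw [Submodule.map₂_span_span, Submodule.span_le]
  rintro _ ⟨x, hx, w, hw, rfl⟩
  exact S.hasCompactSupport_α_mul_of_mem_generators hx hw

end FreeProperSetup

variable {G T A : Type*} [Group G] [TopologicalSpace G] [IsTopologicalGroup G]
  [LocallyCompactSpace G] [T2Space G]
  [TopologicalSpace T] [LocallyCompactSpace T] [T2Space T]
  [NonUnitalCStarAlgebra A]

theorem average_descends_to_quotient_general (S : FreeProperSetup G T A)
    (N : Subgroup G) (hNclosed : IsClosed (N : Set G))
    [MeasurableSpace ↥N] [BorelSpace ↥N] (μN : Measure ↥N) [μN.IsHaarMeasure]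
    (a b : A) (ha : a ∈ S.A₀) (hb : b ∈ S.A₀) :
    (∀ t t' : G, (QuotientGroup.mk t : G ⧸ N) = QuotientGroup.mk t' →
      ∫ n : ↥N, S.α (t * ↑n) a * b ∂μN = ∫ n : ↥N, S.α (t' * ↑n) a * b ∂μN) ∧
    ∃ F : G ⧸ N → A,
      (∀ t : G, F (QuotientGroup.mk t) = ∫ n : ↥N, S.α (t * ↑n) a * b ∂μN) ∧
      (∀ F' : G ⧸ N → A,
        (∀ t : G, F' (QuotientGroup.mk t) = ∫ n : ↥N, S.α (t * ↑n) a * b ∂μN) → F' = F) ∧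
      Continuous F ∧
      ∃ C : Set (G ⧸ N), IsCompact C ∧ ∀ x ∉ C, F x = 0 := by
  have hsupp := S.hasCompactSupport_α_mul ha hb
  have hcont : Continuous fun s => S.α s a * b := (S.α_continuous a).mul continuous_const
  refine ⟨fun t t' => integral_mul_subgroup_eq_of_mk_eq μN (fun s => S.α s a * b),
    cosetIntegral μN fun s => S.α s a * b, cosetIntegral_mk μN _, fun F' hF' => ?_,
    continuous_cosetIntegral μN _ hNclosed hcont hsupp,
    _, hsupp.image QuotientGroup.continuous_mk, fun _ => cosetIntegral_eq_zero_of_notMem μN _⟩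
  funext x
  induction x using QuotientGroup.induction_on with | H t => exact hF' t

/-- For `a, b ∈ A₀` the integral `∫_N α_{tn}(a)·b dμ_N(n)` depends only on the coset `tN`;
the induced function `F_{a,b} : G/N → A` is the unique function with
`F_{a,b}(q(t)) = ∫_N α_{tn}(a)·b dμ_N(n)`, and it is norm-continuous and vanishes outside a
compact subset of `G/N`. -/
theorem average_descends_to_quotient (S : FreeProperSetup G T A)
    (N : Subgroup G) [hN : N.Normal] (hNclosed : IsClosed (N : Set G))
    [MeasurableSpace ↥N] [BorelSpace ↥N] (μN : Measure ↥N) [μN.IsHaarMeasure]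
    (a b : A) (ha : a ∈ S.A₀) (hb : b ∈ S.A₀) :
    (∀ t t' : G, (QuotientGroup.mk t : G ⧸ N) = QuotientGroup.mk t' →
      ∫ n : ↥N, S.α (t * ↑n) a * b ∂μN = ∫ n : ↥N, S.α (t' * ↑n) a * b ∂μN) ∧
    ∃ F : G ⧸ N → A,
      (∀ t : G, F (QuotientGroup.mk t) = ∫ n : ↥N, S.α (t * ↑n) a * b ∂μN) ∧
      (∀ F' : G ⧸ N → A,
        (∀ t : G, F' (QuotientGroup.mk t) = ∫ n : ↥N, S.α (t * ↑n) a * b ∂μN) → F' = F) ∧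
      Continuous F ∧
      ∃ C : Set (G ⧸ N), IsCompact C ∧ ∀ x ∉ C, F x = 0 :=
  average_descends_to_quotient_general S N hNclosed μN a b ha hb
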